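/- Let n ≥ 2 and let G be a simple graph on Fin n. Then G has a nontrivial automorphism (a graph isomorphism G ≃g G other than the identity) if and only if there exists a permutation σ ≠ 1 of Fin n such that M_σ '' S(G) = S(G), where S(G) = {s i : i ∈ Fin n} ∪ {(s i + s j)/2 : G.Adj i j} is the point-set form of G built from the centered standard simplex vertices s. -/

import Mathlib

/-- The centered standard simplex vertices: `s i = e_i - (1/n) • ∑ j, e_j`,
where `e_i` is the standard basis of `EuclideanSpace ℝ (Fin n)`. -/
noncomputable def simplexPt (n : ℕ) (i : Fin n) : EuclideanSpace ℝ (Fin n) :=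
  EuclideanSpace.single i (1 : ℝ) - ((1 : ℝ) / n) • ∑ j, EuclideanSpace.single j (1 : ℝ)

/-- The coordinate-permutation map `M_σ` (the permutation matrix of `σ`), as a linear
isometry equivalence of `EuclideanSpace ℝ (Fin n)`. -/
noncomputable def Mperm (n : ℕ) (σ : Equiv.Perm (Fin n)) :
    EuclideanSpace ℝ (Fin n) ≃ₗᵢ[ℝ] EuclideanSpace ℝ (Fin n) :=
  LinearIsometryEquiv.piLpCongrLeft 2 ℝ ℝ σ

/-- The point-set form of a simple graph `G` on `Fin n`:
`S(G) = {s i : i} ∪ {(s i + s j)/2 : G.Adj i j}`. -/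
noncomputable def pointSet (n : ℕ) (G : SimpleGraph (Fin n)) :
    Set (EuclideanSpace ℝ (Fin n)) :=
  Set.range (simplexPt n) ∪
    {p | ∃ i j : Fin n, G.Adj i j ∧ p = (2 : ℝ)⁻¹ • (simplexPt n i + simplexPt n j)}

/-! Every point of `S(G)` is a midpoint `(s i + s j)/2`, the vertices being those of the pairs
`s(i, i)`. As `s i` is `e_i` shifted by a fixed vector and `e_i + e_j` determines `s(i, j)`,
`S` is an injective encoding of graphs on `Fin n`. Since `M_σ` sends the midpoint of `s(i, j)` to
that of `s(σ i, σ j)`, we get `M_σ '' S(G) = S(G.map σ)`, which equals `S(G)` exactly when `σ` is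
an automorphism of `G`. -/

namespace SimpleGraph

variable {V W : Type*} {G : SimpleGraph V} {G' : SimpleGraph W}

lemma Iso.map_eq (e : G ≃g G') : G.map e = G' := by
  ext u v
  refine (map_adj e.toEquiv.toEmbedding G u v).trans ?_
  constructor
  · rintro ⟨a, b, hab, rfl, rfl⟩
    exact e.map_adj_iff.mpr hab
  · intro huv
    exact ⟨e.symm u, e.symm v, e.symm.map_adj_iff.mpr huv, e.apply_symm_apply u,
      e.apply_symm_apply v⟩

def Iso.ofMapEq (σ : V ≃ V) (h : G.map σ = G) : G ≃g G where
  toEquiv := σ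
  map_rel_iff' {a b} := by
    conv_lhs => rw [← h]
    exact (Iso.map σ G).map_adj_iff

lemma exists_iso_ne_refl_iff_exists_perm_map_eq :
    (∃ f : G ≃g G, f ≠ Iso.refl) ↔ ∃ σ : Equiv.Perm V, σ ≠ 1 ∧ G.map σ = G := by
  constructor
  · rintro ⟨f, hf⟩
    refine ⟨f.toEquiv, fun h => hf (RelIso.ext fun x => Equiv.congr_fun h x), f.map_eq⟩
  · rintro ⟨σ, hσ, h⟩
    exact ⟨Iso.ofMapEq σ h, fun hf => hσ (Equiv.ext fun x => DFunLike.congr_fun hf x)⟩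

end SimpleGraph

section PointSet

variable {n : ℕ}

lemma Mperm_simplexPt (σ : Equiv.Perm (Fin n)) (i : Fin n) :
    Mperm n σ (simplexPt n i) = simplexPt n (σ i) := by
  simp only [simplexPt, Mperm, map_sub, map_smul, map_sum, EuclideanSpace.single,
    LinearIsometryEquiv.piLpCongrLeft_single]
  congr 2
  exact Equiv.sum_comp σ fun j => PiLp.single 2 j (1 : ℝ)

variable (n) in
noncomputable def simplexMidpoint (i j : Fin n) : EuclideanSpace ℝ (Fin n) :=
  (2 : ℝ)⁻¹ • (simplexPt n i + simplexPt n j)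

lemma pointSet_eq (G : SimpleGraph (Fin n)) :
    pointSet n G = Set.range (simplexPt n) ∪
      {p | ∃ i j, G.Adj i j ∧ p = simplexMidpoint n i j} := rfl

lemma simplexMidpoint_self (i : Fin n) : simplexMidpoint n i i = simplexPt n i := by
  rw [simplexMidpoint, ← two_smul ℝ, inv_smul_smul₀ two_ne_zero]

lemma simplexMidpoint_eq (i j : Fin n) : simplexMidpoint n i j =
    (2 : ℝ)⁻¹ • (EuclideanSpace.single i 1 + EuclideanSpace.single j 1) -
      ((1 : ℝ) / n) • ∑ k, EuclideanSpace.single k (1 : ℝ) := by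
  simp only [simplexMidpoint, simplexPt]
  module

lemma simplexMidpoint_inj {i j i' j' : Fin n} :
    simplexMidpoint n i j = simplexMidpoint n i' j' ↔ s(i, j) = s(i', j') := by
  refine ⟨fun h => ?_, fun h => ?_⟩
  · rw [simplexMidpoint_eq, simplexMidpoint_eq, sub_left_inj,
      (smul_right_injective _ (inv_ne_zero two_ne_zero)).eq_iff] at h
    have h' := congrArg WithLp.ofLp h
    simp only [WithLp.ofLp_add, PiLp.ofLp_single,
      Pi.single_add_single_eq_single_add_single one_ne_zero one_ne_zero] at h'
    obtain h' | ⟨-, h'⟩ | ⟨two_eq_zero, -⟩ := h'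
    · exact Sym2.eq_iff.mpr (Or.inl h')
    · exact Sym2.eq_iff.mpr (Or.inr h')
    · norm_num at two_eq_zero
  · rcases Sym2.eq_iff.mp h with ⟨rfl, rfl⟩ | ⟨rfl, rfl⟩
    · rfl
    · rw [simplexMidpoint, simplexMidpoint, add_comm]

lemma Mperm_simplexMidpoint (σ : Equiv.Perm (Fin n)) (i j : Fin n) :
    Mperm n σ (simplexMidpoint n i j) = simplexMidpoint n (σ i) (σ j) := by
  rw [simplexMidpoint, map_smul, map_add, Mperm_simplexPt, Mperm_simplexPt, simplexMidpoint]

lemma image_Mperm_pointSet (σ : Equiv.Perm (Fin n)) (G : SimpleGraph (Fin n)) :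
    Mperm n σ '' pointSet n G = pointSet n (G.map σ) := by
  rw [pointSet_eq, pointSet_eq, Set.image_union, ← Set.range_comp]
  congr 1
  · rw [show Mperm n σ ∘ simplexPt n = simplexPt n ∘ σ from funext (Mperm_simplexPt σ),
      σ.surjective.range_comp]
  · ext p
    simp only [Set.mem_image, Set.mem_ofPred_eq]
    constructor
    · rintro ⟨_, ⟨i, j, hij, rfl⟩, rfl⟩
      exact ⟨σ i, σ j, (SimpleGraph.Iso.map σ G).map_adj_iff.mpr hij,
        Mperm_simplexMidpoint σ i j⟩
    · rintro ⟨_, _, huv, rfl⟩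
      obtain ⟨i, j, hij, rfl, rfl⟩ := (SimpleGraph.map_adj σ.toEmbedding G _ _).mp huv
      exact ⟨_, ⟨i, j, hij, rfl⟩, Mperm_simplexMidpoint σ i j⟩

lemma simplexMidpoint_mem_pointSet_iff {G : SimpleGraph (Fin n)} {i j : Fin n} (hij : i ≠ j) :
    simplexMidpoint n i j ∈ pointSet n G ↔ G.Adj i j := by
  refine ⟨?_, fun h => Or.inr ⟨i, j, h, rfl⟩⟩
  rintro (⟨m, hm⟩ | ⟨i', j', h', he⟩)
  · rw [← simplexMidpoint_self, simplexMidpoint_inj, Sym2.eq_iff] at hm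
    rcases hm with ⟨rfl, rfl⟩ | ⟨rfl, rfl⟩ <;> exact absurd rfl hij
  · rw [← G.mem_edgeSet, simplexMidpoint_inj.mp he]
    exact h'

lemma pointSet_injective : Function.Injective (pointSet n) := by
  intro G H h
  ext i j
  by_cases hij : i = j
  · simp [hij]
  · rw [← simplexMidpoint_mem_pointSet_iff hij, h, simplexMidpoint_mem_pointSet_iff hij]

end PointSet

theorem nontrivial_automorphism_iff_nontrivial_symmetry_general
    (n : ℕ) (G : SimpleGraph (Fin n)) :
    (∃ f : G ≃g G, f ≠ (SimpleGraph.Iso.refl : G ≃g G)) ↔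
      ∃ σ : Equiv.Perm (Fin n), σ ≠ 1 ∧ Mperm n σ '' pointSet n G = pointSet n G := by
  simp_rw [SimpleGraph.exists_iso_ne_refl_iff_exists_perm_map_eq, image_Mperm_pointSet,
    pointSet_injective.eq_iff]

theorem nontrivial_automorphism_iff_nontrivial_symmetry
    (n : ℕ) (hn : 2 ≤ n) (G : SimpleGraph (Fin n)) :
    (∃ f : G ≃g G, f ≠ (SimpleGraph.Iso.refl : G ≃g G)) ↔
      ∃ σ : Equiv.Perm (Fin n), σ ≠ 1 ∧ Mperm n σ '' pointSet n G = pointSet n G :=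
  nontrivial_automorphism_iff_nontrivial_symmetry_general n G
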